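/- arXiv:1603.00923 — 5 statements merged into one kernel-verified Lean document; each statement's English description precedes it below -/
import Mathlib

section
/- For every complex number z with |z| < 1, one has |1/(1-z)| ≤ (1/(1-|z|)) · exp(Re(z) - |z|). -/
/-!
Write `r = ‖z‖` and `t = r - Re z ∈ [0, 2r]`; then `‖1 - z‖² = (1 - r)² + 2t`, so the claim is
`(1 - r)² e^{2t} ≤ (1 - r)² + 2t`. The difference of the two sides is convex in `t` and vanishes
at `t = 0`, so it suffices to check `t = 2r`, i.e. `(1 - r) e^{2r} ≤ 1 + r`, which is
`2r ≤ log (1 + r) - log (1 - r) = 2 artanh r`.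
-/

open Real

theorem two_mul_le_log_one_add_sub_log_one_sub {r : ℝ} (h0 : 0 ≤ r) (h1 : r < 1) :
    2 * r ≤ log (1 + r) - log (1 - r) := by
  have hs := hasSum_log_sub_log_of_abs_lt_one (abs_lt.2 ⟨by linarith, h1⟩)
  simpa using le_hasSum hs 0 fun k _ => by positivity

theorem one_sub_mul_exp_two_mul_le {r : ℝ} (h0 : 0 ≤ r) (h1 : r < 1) :
    (1 - r) * exp (2 * r) ≤ 1 + r := by
  have h1r : 0 < 1 - r := by linarith
  calc (1 - r) * exp (2 * r) ≤ (1 - r) * exp (log (1 + r) - log (1 - r)) := by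
        gcongr
        exact two_mul_le_log_one_add_sub_log_one_sub h0 h1
    _ = 1 + r := by
        rw [exp_sub, exp_log (by linarith), exp_log h1r]
        field_simp

theorem mul_exp_le_add_of_le {a b u : ℝ} (ha : 0 ≤ a) (hb : a * exp b ≤ a + b)
    (hu0 : 0 ≤ u) (hub : u ≤ b) : a * exp u ≤ a + u := by
  have hconv : ConvexOn ℝ Set.univ fun x => a * exp x - x :=
    (convexOn_exp.smul ha).sub (concaveOn_id convex_univ)
  have h := hconv.le_max_of_mem_Icc (Set.mem_univ 0) (Set.mem_univ b) ⟨hu0, hub⟩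
  simp only [exp_zero, mul_one, sub_zero] at h
  linarith [max_le le_rfl (show a * exp b - b ≤ a by linarith)]

theorem norm_one_sub_sq (z : ℂ) : ‖1 - z‖ ^ 2 = (1 - ‖z‖) ^ 2 + 2 * (‖z‖ - z.re) := by
  rw [Complex.sq_norm, Complex.normSq_sub, ← Complex.sq_norm z]
  simp only [map_one, one_mul, Complex.conj_re]
  ring

theorem one_sub_norm_mul_exp_le_norm_one_sub {z : ℂ} (hz : ‖z‖ < 1) :
    (1 - ‖z‖) * exp (‖z‖ - z.re) ≤ ‖1 - z‖ := by
  have hre := Complex.abs_re_le_norm z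
  have hend : (1 - ‖z‖) ^ 2 * exp (4 * ‖z‖) ≤ (1 - ‖z‖) ^ 2 + 4 * ‖z‖ := by
    have h := one_sub_mul_exp_two_mul_le (norm_nonneg z) hz
    calc (1 - ‖z‖) ^ 2 * exp (4 * ‖z‖) = ((1 - ‖z‖) * exp (2 * ‖z‖)) ^ 2 := by
          rw [mul_pow, sq (exp _), ← exp_add]
          ring_nf
      _ ≤ (1 + ‖z‖) ^ 2 := pow_le_pow_left₀ (mul_nonneg (by linarith) (exp_pos _).le) h 2
      _ = (1 - ‖z‖) ^ 2 + 4 * ‖z‖ := by ring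
  have hsq := mul_exp_le_add_of_le (sq_nonneg _) hend (u := 2 * (‖z‖ - z.re))
    (by linarith [le_abs_self z.re]) (by linarith [neg_abs_le z.re])
  rw [← norm_one_sub_sq] at hsq
  refine le_of_pow_le_pow_left₀ two_ne_zero (norm_nonneg _) ?_
  rwa [mul_pow, sq (exp _), ← exp_add, ← two_mul]

theorem abs_one_div_one_sub_le (z : ℂ) (hz : ‖z‖ < 1) :
    ‖1 / (1 - z)‖ ≤ (1 / (1 - ‖z‖)) * Real.exp (z.re - ‖z‖) := by
  have hpos : 0 < (1 - ‖z‖) * exp (‖z‖ - z.re) := by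
    have := sub_pos.2 hz
    positivity
  calc ‖1 / (1 - z)‖ = 1 / ‖1 - z‖ := by rw [norm_div, norm_one]
    _ ≤ 1 / ((1 - ‖z‖) * exp (‖z‖ - z.re)) :=
        one_div_le_one_div_of_le hpos (one_sub_norm_mul_exp_le_norm_one_sub hz)
    _ = 1 / (1 - ‖z‖) * exp (z.re - ‖z‖) := by
        rw [exp_sub, exp_sub]
        field_simp
end

section
/- For 0 < r < 1 and θ ∈ (-π, π], the infinite product p(q) = ∏_{j≥1} (1 - q^j)^{-1} evaluated at q = r e^{iθ} satisfies |p(r e^{iθ})| ≤ p(r) · exp( - α r θ² / ((1-r)((1-r)² + 2 r α θ²)) ), where α = 2/π². -/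
/-!
Taking logarithms, `log |p(q)| = ∑ⱼ -log |1 - qʲ|`. Comparing the Taylor series
`-log (1 - z) = ∑ zⁿ / n` with `-log (1 - |z|) = ∑ |z|ⁿ / n` term by term, and keeping only the
first term of the difference, gives `-log |1 - z| ≤ -log (1 - |z|) - (|z| - Re z)`. Summed over
`z = qʲ` this yields `|p(q)| ≤ p(r) · exp (-(r / (1 - r) - Re (q / (1 - q))))`. The exponent is an
explicit increasing function of `w = r - Re q = r (1 - cos θ)`, and `1 - cos θ ≥ 2 θ² / π²`
on `[-π, π]`.
-/

open Real Complex

lemma hasSum_geometric_succ_of_norm_lt_one {K : Type*} [NormedDivisionRing K] {ξ : K}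
    (h : ‖ξ‖ < 1) : HasSum (fun n : ℕ ↦ ξ ^ (n + 1)) (ξ / (1 - ξ)) := by
  simpa [pow_succ', div_eq_mul_inv] using (hasSum_geometric_of_norm_lt_one h).mul_left ξ

section Products

variable {ι : Type*}

lemma Real.summable_log_one_sub {x : ι → ℝ} (hx : Summable x) :
    Summable fun i ↦ log (1 - x i) := by
  simpa [sub_eq_add_neg] using summable_log_one_add_of_summable hx.neg

lemma Real.hasProd_one_sub_inv {x : ι → ℝ} (hx : Summable x) (hx1 : ∀ i, x i < 1) :
    HasProd (fun i ↦ (1 - x i)⁻¹) (rexp (-∑' i, log (1 - x i))) := by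
  rw [Real.exp_neg]
  exact (hasProd_of_hasSum_log (fun i ↦ sub_pos.2 (hx1 i))
    (summable_log_one_sub hx).hasSum).inv₀ (Real.exp_ne_zero _)

lemma Complex.summable_log_one_sub {z : ι → ℂ} (hz : Summable z) :
    Summable fun i ↦ log (1 - z i) := by
  simpa [sub_eq_add_neg] using summable_log_one_add_of_summable hz.neg

lemma Complex.hasProd_one_sub_inv {z : ι → ℂ} (hz : Summable z) (hz1 : ∀ i, z i ≠ 1) :
    HasProd (fun i ↦ (1 - z i)⁻¹) (exp (-∑' i, log (1 - z i))) := by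
  rw [Complex.exp_neg]
  exact (hasProd_of_hasSum_log (fun i ↦ sub_ne_zero.2 (hz1 i).symm)
    (summable_log_one_sub hz).hasSum).inv₀ (exp_ne_zero _)

end Products

namespace Complex

lemma log_one_sub_norm_add_norm_sub_re_le {z : ℂ} (hz : ‖z‖ < 1) :
    Real.log (1 - ‖z‖) + (‖z‖ - z.re) ≤ Real.log ‖1 - z‖ := by
  have hC : HasSum (fun n : ℕ ↦ (z ^ (n + 1) / (n + 1)).re) (-Real.log ‖1 - z‖) := by
    simpa [log_re] using hasSum_re (hasSum_taylorSeries_neg_log' hz)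
  have hR := Real.hasSum_pow_div_log_of_abs_lt_one (x := ‖z‖) (by rwa [abs_norm])
  have hterm (n : ℕ) : (z ^ (n + 1) / (n + 1)).re ≤ ‖z‖ ^ (n + 1) / (n + 1) := by
    have := re_le_norm (z ^ (n + 1) / (n + 1))
    rw [norm_div, norm_pow, ← Nat.cast_add_one, norm_natCast] at this
    exact_mod_cast this
  have := le_hasSum (hR.sub hC) 0 (fun n _ ↦ sub_nonneg.2 (hterm n))
  simp only [zero_add, pow_one, CharP.cast_eq_zero, div_one, sub_neg_eq_add,
    le_neg_add_iff_add_le] at this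
  linarith

lemma norm_tprod_one_sub_inv_le {ι : Type*} {z : ι → ℂ} (hz : Summable (‖z ·‖))
    (hz1 : ∀ i, ‖z i‖ < 1) :
    ‖∏' i, (1 - z i)⁻¹‖
      ≤ (∏' i, (1 - ‖z i‖)⁻¹) * rexp (-(∑' i, ‖z i‖ - (∑' i, z i).re)) := by
  have hne (i : ι) : z i ≠ 1 := fun h ↦ by simpa [h] using hz1 i
  rw [(hasProd_one_sub_inv hz.of_norm hne).tprod_eq, (Real.hasProd_one_sub_inv hz hz1).tprod_eq,
    norm_exp, ← Real.exp_add, Real.exp_le_exp, neg_re]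
  have hlog : HasSum (fun i ↦ Real.log ‖1 - z i‖) (∑' i, log (1 - z i)).re := by
    simpa [log_re] using hasSum_re (summable_log_one_sub hz.of_norm).hasSum
  have hbound := (Real.summable_log_one_sub hz).hasSum.add
    (hz.hasSum.sub (hasSum_re hz.of_norm.hasSum))
  have := hasSum_le (fun i ↦ log_one_sub_norm_add_norm_sub_re_le (hz1 i)) hbound hlog
  linarith

lemma re_div_one_sub_le {z : ℂ} {a : ℝ} (hz : ‖z‖ < 1) (ha : 0 ≤ a) (haz : a ≤ ‖z‖ - z.re) :
    (z / (1 - z)).re ≤ ‖z‖ / (1 - ‖z‖) - a / ((1 - ‖z‖) * ((1 - ‖z‖) ^ 2 + 2 * a)) := by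
  set s := ‖z‖
  have hs : s ^ 2 = z.re ^ 2 + z.im ^ 2 := by
    rw [← normSq_eq_norm_sq, normSq_apply]; ring
  have hnormSq : normSq (1 - z) = (1 - s) ^ 2 + 2 * (s - z.re) := by
    rw [normSq_apply]; simp only [sub_re, one_re, sub_im, one_im]; nlinarith
  have hre : (z / (1 - z)).re = (z.re - s ^ 2) / ((1 - s) ^ 2 + 2 * (s - z.re)) := by
    rw [div_re, hnormSq, ← add_div]; congr 1; simp only [sub_re, one_re, sub_im, one_im]; nlinarith
  set w := s - z.re
  have hs1 : 0 < 1 - s := by linarith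
  have hw0 : 0 ≤ w := ha.trans haz
  have hDa : 0 < (1 - s) ^ 2 + 2 * a := by positivity
  have hDw : 0 < (1 - s) ^ 2 + 2 * w := by positivity
  have hw : s / (1 - s) - (z.re - s ^ 2) / ((1 - s) ^ 2 + 2 * w)
      = (1 + s) * w / ((1 - s) * ((1 - s) ^ 2 + 2 * w)) := by
    field_simp
    ring
  rw [hre, le_sub_comm, hw, div_le_div_iff₀ (by positivity) (by positivity)]
  have : 0 ≤ (1 - s) * ((1 - s) ^ 2 * (w - a) + s * w * ((1 - s) ^ 2 + 2 * a)) := by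
    have := sub_nonneg.2 haz
    positivity
  nlinarith

end Complex

/-- Lemma 1 of the paper: bound on `|p(q)|` for `q = r e^{iθ}`, where
`p(q) = ∏_{j ≥ 1} (1 - q^j)⁻¹` is the Euler partition generating function and `α = 2/π²`. -/
theorem abs_euler_prod_le (r θ : ℝ) (hr0 : 0 < r) (hr1 : r < 1) (hθ1 : -π < θ) (hθ2 : θ ≤ π) :
    ‖(∏' j : ℕ, (1 - (r * Complex.exp (θ * Complex.I)) ^ (j + 1))⁻¹)‖
      ≤ (∏' j : ℕ, (1 - r ^ (j + 1))⁻¹)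
        * Real.exp (-((2 / π ^ 2) * r * θ ^ 2
            / ((1 - r) * ((1 - r) ^ 2 + 2 * r * (2 / π ^ 2) * θ ^ 2)))) := by
  set q : ℂ := r * exp (θ * I)
  have hq : ‖q‖ = r := by simp [q, abs_of_pos hr0]
  have hq1 : ‖q‖ < 1 := hq ▸ hr1
  have hgap : 2 / π ^ 2 * r * θ ^ 2 ≤ ‖q‖ - q.re := by
    have := cos_le_one_sub_mul_cos_sq (abs_le.2 ⟨hθ1.le, hθ2⟩)
    have hre : q.re = r * Real.cos θ := by simp [q, exp_ofReal_mul_I_re]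
    rw [hq, hre]
    nlinarith
  have hsum := hasSum_geometric_succ_of_norm_lt_one hq1
  have hsum_norm := hasSum_geometric_succ_of_norm_lt_one (show ‖‖q‖‖ < 1 by rwa [norm_norm])
  simp only [← norm_pow] at hsum_norm
  have hprod := norm_tprod_one_sub_inv_le hsum_norm.summable
    (fun j ↦ by simpa [norm_pow] using pow_lt_one₀ (norm_nonneg q) hq1 j.succ_ne_zero)
  have hre := re_div_one_sub_le hq1 (by positivity) hgap
  rw [hsum.tsum_eq, hsum_norm.tsum_eq] at hprod
  simp only [norm_pow, hq] at hprod hre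
  refine hprod.trans (mul_le_mul_of_nonneg_left (Real.exp_le_exp.2 ?_) ?_)
  · rw [show 2 * (2 / π ^ 2 * r * θ ^ 2) = 2 * r * (2 / π ^ 2) * θ ^ 2 by ring] at hre
    linarith
  · exact tprod_nonneg fun j ↦ inv_nonneg.2 (sub_nonneg.2 (pow_le_one₀ hr0.le hr1.le))
end

section
/- A partition λ of an even integer n is the size-ordered degree sequence of a simple graph if and only if ∑_{j=1}^i λ'_j ≥ ∑_{j=1}^i λ_j + i for all 1 ≤ i ≤ D(λ), where λ' is the conjugate partition and D(λ) is the size of the Durfee square of λ. -/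
/-!
For `i ≤ D(λ)` the first `i` parts are all at least `i`, so
`∑_{j ≤ i} λ'_j = i² + ∑_{j > i} min(λ_j, i)` and the Nash-Williams inequality at `i` is the
Erdős–Gallai inequality at `i`; beyond the Durfee square the Erdős–Gallai inequalities follow from
the one at `D(λ)`.

Necessity of the Erdős–Gallai inequality at `i` is double counting of the edges at the `i`
vertices of largest degree. Sufficiency is Choudum's induction on `∑ λ`: lowering by one the last
positive part `λ_b` and the last part `λ_a` (`a < b`) equal to `λ_1` keeps the sequence a
partition and preserves all the inequalities, and a realisation of the smaller sequence becomes one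
of `λ` by adding the edge `ab`, or, if `ab` is already an edge, by a 2-switch through a vertex
`w ≤ b` not adjacent to `a`.
-/

open Finset Function SimpleGraph

-- Parts are indexed from `0`: `l j` is `λ_{j+1}` and `conjPart m l j` is `λ'_{j+1}`.
def conjPart (m : ℕ) (l : ℕ → ℕ) (j : ℕ) : ℕ := #{t ∈ range m | j + 1 ≤ l t}

def durfee (m : ℕ) (l : ℕ → ℕ) : ℕ := #{t ∈ range m | t + 1 ≤ l t}

-- `∑_{j ≤ i} λ_j ≤ i(i-1) + ∑_{j > i} min(λ_j, i)`, written without truncated subtraction.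
def ErdosGallaiAt (m : ℕ) (l : ℕ → ℕ) (i : ℕ) : Prop :=
  ∑ j ∈ range i, l j + i ≤ i * i + ∑ j ∈ Ico i m, min (l j) i

theorem sum_range_conjPart (m i : ℕ) (l : ℕ → ℕ) :
    ∑ j ∈ range i, conjPart m l j = ∑ t ∈ range m, min (l t) i := by
  simp only [conjPart, card_filter]
  rw [sum_comm]
  refine sum_congr rfl fun t _ => ?_
  rw [← card_filter, ← card_range (min (l t) i)]
  congr 1
  ext j
  simp only [mem_filter, mem_range]
  omega

section Durfee

variable {m : ℕ} {l : ℕ → ℕ}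

theorem durfee_le : durfee m l ≤ m :=
  (card_filter_le _ _).trans_eq (card_range m)

theorem durfee_le_apply_of_lt (hanti : Antitone l) {t : ℕ} (ht : t < durfee m l) :
    durfee m l ≤ l t := by
  by_contra! h
  have hsub : {s ∈ range m | s + 1 ≤ l s} ⊆ range (max t (l t)) := by
    intro s hs
    simp only [mem_filter, mem_range] at hs ⊢
    rcases lt_or_ge s t with hst | hts
    · omega
    · have := hanti hts
      omega
  have := card_le_card hsub
  rw [card_range] at this
  unfold durfee at ht h
  omega

theorem apply_le_durfee_of_durfee_le (hanti : Antitone l) (hzero : ∀ j, m ≤ j → l j = 0)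
    {t : ℕ} (ht : durfee m l ≤ t) : l t ≤ durfee m l := by
  by_contra! h
  have htm : t < m := by
    by_contra! htm
    rw [hzero t htm] at h
    omega
  have hsub : range (durfee m l + 1) ⊆ {s ∈ range m | s + 1 ≤ l s} := by
    intro s hs
    simp only [mem_filter, mem_range] at hs ⊢
    have := hanti (show s ≤ t by omega)
    omega
  have := card_le_card hsub
  rw [card_range] at this
  unfold durfee at this
  omega

theorem nashWilliams_iff_erdosGallaiAt (hanti : Antitone l) {i : ℕ} (hi : i ≤ durfee m l) :
    ∑ j ∈ range i, l j + i ≤ ∑ j ∈ range i, conjPart m l j ↔ ErdosGallaiAt m l i := by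
  have hhead : ∑ t ∈ range i, min (l t) i = i * i := by
    rw [sum_congr rfl fun t ht => min_eq_right
      (hi.trans (durfee_le_apply_of_lt hanti ((mem_range.1 ht).trans_le hi))),
      sum_const, card_range, smul_eq_mul]
  rw [sum_range_conjPart, ErdosGallaiAt, range_eq_Ico m,
    ← sum_Ico_consecutive _ (Nat.zero_le i) (hi.trans durfee_le), ← range_eq_Ico, hhead]

theorem erdosGallaiAt_of_forall_le_durfee (hanti : Antitone l) (hzero : ∀ j, m ≤ j → l j = 0)
    (h : ∀ i ≤ durfee m l, ErdosGallaiAt m l i) (i : ℕ) : ErdosGallaiAt m l i := by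
  set D := durfee m l
  rcases le_or_gt i D with hi | hi
  · exact h i hi
  have htail : ∀ k, D ≤ k → ∑ j ∈ Ico k m, min (l j) k = ∑ j ∈ Ico k m, l j :=
    fun k hk => sum_congr rfl fun j hj => min_eq_left
      ((apply_le_durfee_of_durfee_le hanti hzero (hk.trans (mem_Ico.1 hj).1)).trans hk)
  have hD := h D le_rfl
  unfold ErdosGallaiAt at hD ⊢
  rw [htail D le_rfl] at hD
  rw [htail i hi.le]
  set S := ∑ j ∈ Ico D i, l j
  have hS : S ≤ (i - D) * D := by
    rw [← Nat.card_Ico, ← smul_eq_mul]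
    exact sum_le_card_nsmul _ _ _ fun j hj =>
      apply_le_durfee_of_durfee_le hanti hzero (mem_Ico.1 hj).1
  have hhead : ∑ j ∈ range i, l j = ∑ j ∈ range D, l j + S := by
    rw [range_eq_Ico, range_eq_Ico, sum_Ico_consecutive _ (Nat.zero_le D) hi.le]
  have htail' : ∑ j ∈ Ico D m, l j ≤ S + ∑ j ∈ Ico i m, l j :=
    (sum_le_sum_of_subset Ico_subset_Ico_union_Ico).trans_eq
      (sum_union (Ico_disjoint_Ico_consecutive D i m))
  -- what remains is `D (D - 1) + 2 (i - D) D ≤ i (i - 1)`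
  obtain ⟨e, rfl⟩ : ∃ e, i = D + e + 1 := ⟨i - D - 1, by omega⟩
  rw [show D + e + 1 - D = e + 1 by omega] at hS
  nlinarith

end Durfee

namespace SimpleGraph

variable {V : Type*} [Fintype V] [DecidableEq V] (G : SimpleGraph V) [DecidableRel G.Adj]
  {a b : V}

theorem degree_eq_card_filter_add_card_filter_compl (S : Finset V) (v : V) :
    G.degree v = #{w ∈ S | G.Adj v w} + #{w ∈ Sᶜ | G.Adj v w} := by
  rw [← card_neighborFinset_eq_degree, neighborFinset_eq_filter, card_filter, card_filter,
    card_filter, sum_add_sum_compl]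

theorem sum_degree_add_card_le (S : Finset V) :
    ∑ v ∈ S, G.degree v + #S ≤ #S * #S + ∑ w ∈ Sᶜ, min (G.degree w) #S := by
  have hinner : ∀ v ∈ S, #{w ∈ S | G.Adj v w} + 1 ≤ #S := fun v hv => by
    rw [← card_erase_add_one hv]
    gcongr
    intro w hw
    rw [mem_filter] at hw
    exact mem_erase.2 ⟨(G.ne_of_adj hw.2).symm, hw.1⟩
  have hcross : ∑ v ∈ S, #{w ∈ Sᶜ | G.Adj v w} = ∑ w ∈ Sᶜ, #{v ∈ S | G.Adj v w} :=
    sum_card_bipartiteAbove_eq_sum_card_bipartiteBelow _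
  have hcross_le : ∀ w, #{v ∈ S | G.Adj v w} ≤ min (G.degree w) #S := fun w => by
    refine le_min ?_ (card_filter_le _ _)
    rw [← card_neighborFinset_eq_degree]
    exact card_le_card fun v hv => (G.mem_neighborFinset w v).2 (mem_filter.1 hv).2.symm
  calc ∑ v ∈ S, G.degree v + #S
      = ∑ v ∈ S, (#{w ∈ S | G.Adj v w} + 1) + ∑ v ∈ S, #{w ∈ Sᶜ | G.Adj v w} := by
        simp only [G.degree_eq_card_filter_add_card_filter_compl S, sum_add_distrib, sum_const,
          smul_eq_mul, mul_one]
        ring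
    _ ≤ ∑ _v ∈ S, #S + ∑ w ∈ Sᶜ, min (G.degree w) #S := by
        rw [hcross]
        gcongr with v hv w
        exacts [hinner v hv, hcross_le w]
    _ = #S * #S + ∑ w ∈ Sᶜ, min (G.degree w) #S := by rw [sum_const, smul_eq_mul]

theorem degree_sdiff_edge (h : G.Adj a b) (v : V) :
    (G \ edge a b).degree v + (if v = a ∨ v = b then 1 else 0) = G.degree v := by
  simp only [← card_neighborFinset_eq_degree]
  split_ifs with hv
  · obtain ⟨c, hc⟩ : ∃ c, (G \ edge a b).neighborFinset v = (G.neighborFinset v).erase c ∧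
        c ∈ G.neighborFinset v := by
      rcases hv with rfl | rfl
      · refine ⟨b, ?_, by simpa⟩
        ext w; simp only [mem_neighborFinset, mem_erase, sdiff_adj, edge_adj]; grind [G.irrefl]
      · refine ⟨a, ?_, by simpa [adj_comm] using h⟩
        ext w; simp only [mem_neighborFinset, mem_erase, sdiff_adj, edge_adj]; grind [G.irrefl]
    rw [hc.1, card_erase_add_one hc.2]
  · rw [add_zero]
    congr 1
    ext w
    simp only [mem_neighborFinset, sdiff_adj, edge_adj]
    tauto

theorem degree_sup_edge (hab : a ≠ b) (h : ¬G.Adj a b) (v : V) :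
    (G ⊔ edge a b).degree v = G.degree v + if v = a ∨ v = b then 1 else 0 := by
  rw [← (G ⊔ edge a b).degree_sdiff_edge (a := a) (b := b) (by simp [edge_adj, hab]) v]
  congr 1
  convert rfl using 2
  rw [sup_sdiff_right_self, sdiff_edge _ h]
theorem exists_degree_add_pair (hab : a ≠ b) {w : V} (hwa : w ≠ a) (haw : ¬G.Adj a w)
    (hbw : G.Adj a b → G.degree b < G.degree w) :
    ∃ (H : SimpleGraph V) (_ : DecidableRel H.Adj),
      ∀ v, H.degree v = G.degree v + if v = a ∨ v = b then 1 else 0 := by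
  by_cases hadj : G.Adj a b
  swap
  · exact ⟨G ⊔ edge a b, inferInstance, G.degree_sup_edge hab hadj⟩
  have hwb : w ≠ b := fun h => haw (h ▸ hadj)
  -- `w` has more neighbours than the closed neighbourhood of `b`, which contains `a`
  obtain ⟨x, hwx, hxb⟩ : ∃ x ∈ G.neighborFinset w, x ∉ insert b (G.neighborFinset b) := by
    by_contra! hsub
    have hcard : #(insert b (G.neighborFinset b)) ≤ #(G.neighborFinset w) := by
      rw [card_neighborFinset_eq_degree]
      exact (card_insert_le _ _).trans (hbw hadj)
    have ha : a ∈ insert b (G.neighborFinset b) := mem_insert_of_mem (by simpa [adj_comm])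
    rw [← eq_of_subset_of_card_le hsub hcard] at ha
    exact haw (G.adj_symm (by simpa using ha))
  rw [mem_neighborFinset] at hwx
  simp only [mem_insert, mem_neighborFinset, not_or] at hxb
  obtain ⟨hxb, hbx⟩ := hxb
  have hxa : x ≠ a := fun h => hbx (h ▸ hadj.symm)
  have hxw : x ≠ w := (G.ne_of_adj hwx).symm
  have h₁ : ¬(G \ edge w x).Adj a w := fun h => haw h.1
  have h₂ : ¬(G \ edge w x ⊔ edge a w).Adj b x := by
    simp only [sup_adj, sdiff_adj, edge_adj]
    tauto
  refine ⟨G \ edge w x ⊔ edge a w ⊔ edge b x, inferInstance, fun v => ?_⟩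
  have := G.degree_sdiff_edge hwx v
  rw [degree_sup_edge _ (Ne.symm hxb) h₂, degree_sup_edge _ hwa.symm h₁]
  grind

end SimpleGraph

theorem sum_filter_fin_eq_sum_filter_range {m : ℕ} (p : ℕ → Prop) [DecidablePred p]
    (f : ℕ → ℕ) : ∑ v ∈ univ.filter (fun v : Fin m => p v), f v = ∑ j ∈ range m with p j, f j := by
  rw [sum_filter, sum_filter, Fin.sum_univ_eq_sum_range (fun j => if p j then f j else 0)]

theorem erdosGallaiAt_of_degree_eq {m : ℕ} {l : ℕ → ℕ} (G : SimpleGraph (Fin m))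
    [DecidableRel G.Adj] (hdeg : ∀ v, G.degree v = l v) {i : ℕ} (hi : i ≤ m) :
    ErdosGallaiAt m l i := by
  have hhead : (range m).filter (· < i) = range i := by
    ext j; simp only [mem_filter, mem_range]; omega
  have htail : (range m).filter (fun j => ¬ j < i) = Ico i m := by
    ext j; simp only [mem_filter, mem_range, mem_Ico]; omega
  have hcard : #{v : Fin m | (v : ℕ) < i} = i := by
    rw [card_eq_sum_ones, sum_filter_fin_eq_sum_filter_range (· < i) (fun _ => 1), hhead,
      sum_const, card_range, smul_eq_mul, mul_one]
  have key := G.sum_degree_add_card_le {v : Fin m | (v : ℕ) < i}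
  simp only [compl_filter, hdeg, hcard] at key
  rwa [sum_filter_fin_eq_sum_filter_range (· < i) l, hhead,
    sum_filter_fin_eq_sum_filter_range (fun j => ¬ j < i) (fun j => min (l j) i), htail] at key

theorem erdosGallaiAt_of_degree_perm {m : ℕ} {l : ℕ → ℕ} (G : SimpleGraph (Fin m))
    [DecidableRel G.Adj] (σ : Equiv.Perm (Fin m)) (hdeg : ∀ v, G.degree (σ v) = l v) {i : ℕ}
    (hi : i ≤ m) : ErdosGallaiAt m l i := by
  classical
  exact erdosGallaiAt_of_degree_eq (G.comap σ)
    (fun v => by rw [← hdeg v, ← (SimpleGraph.Iso.comap σ G).degree_eq v]; rfl) hi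

theorem sum_comp_update_add (s : Finset ℕ) (f : ℕ → ℕ) (l : ℕ → ℕ) (c v : ℕ) :
    ∑ j ∈ s, f (update l c v j) + (if c ∈ s then f (l c) else 0)
      = ∑ j ∈ s, f (l j) + if c ∈ s then f v else 0 := by
  by_cases hc : c ∈ s
  · rw [← add_sum_erase s _ hc, ← add_sum_erase s (fun j => f (l j)) hc,
      sum_congr rfl fun j hj => by rw [update_of_ne (ne_of_mem_erase hj)]]
    simp only [update_self, if_pos hc]
    ring
  · rw [sum_congr rfl fun j hj => by rw [update_of_ne (ne_of_mem_of_not_mem hj hc)]]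
    simp only [if_neg hc]

section Decrement

variable {m : ℕ} {l : ℕ → ℕ} {a b c : ℕ}

theorem sum_range_update_pred (hc : 1 ≤ l c) (i : ℕ) :
    ∑ j ∈ range i, l j = ∑ j ∈ range i, update l c (l c - 1) j + if c < i then 1 else 0 := by
  have := sum_comp_update_add (range i) id l c (l c - 1)
  simp only [id, mem_range] at this
  split_ifs at this ⊢ <;> omega

theorem sum_Ico_min_update_pred (hc : 1 ≤ l c) (hcm : c < m) (i : ℕ) :
    ∑ j ∈ Ico i m, min (l j) i
      = ∑ j ∈ Ico i m, min (update l c (l c - 1) j) i + if i ≤ c ∧ l c ≤ i then 1 else 0 := by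
  have := sum_comp_update_add (Ico i m) (min · i) l c (l c - 1)
  simp only [mem_Ico] at this
  split_ifs at this ⊢ <;> omega

theorem antitone_update_pred (hanti : Antitone l) (hc : l (c + 1) < l c) :
    Antitone (update l c (l c - 1)) := by
  refine antitone_nat_of_succ_le fun j => ?_
  have := hanti (show j ≤ j + 1 by omega)
  simp only [update_apply]
  split_ifs <;> subst_vars <;> omega

theorem antitone_update_pred_pair (hanti : Antitone l) (hab : a < b) (hb : 1 ≤ l b)
    (hbzero : l (b + 1) = 0) (hstep : a + 1 = b ∨ l (a + 1) < l a) :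
    Antitone (update (update l b (l b - 1)) a (l a - 1)) := by
  have hl₁a : update l b (l b - 1) a = l a := update_of_ne hab.ne _ _
  have := antitone_update_pred (c := a) (antitone_update_pred (c := b) hanti (by omega)) ?_
  · rwa [hl₁a] at this
  have hba := hanti hab.le
  rw [hl₁a, update_apply]
  rcases hstep with h | h <;> split_ifs <;> omega

theorem sum_range_update_pred_pair (hab : a < b) (hbm : b < m) (hb : 1 ≤ l b) (ha : 1 ≤ l a) :
    ∑ j ∈ range m, update (update l b (l b - 1)) a (l a - 1) j + 2 = ∑ j ∈ range m, l j := by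
  have hl₁a : update l b (l b - 1) a = l a := update_of_ne hab.ne _ _
  have h₁ := sum_range_update_pred hb m
  have h₂ := sum_range_update_pred (l := update l b (l b - 1)) (hl₁a ▸ ha) m
  rw [hl₁a, if_pos (hab.trans hbm)] at h₂
  rw [if_pos hbm] at h₁
  omega

end Decrement

section Choudum

variable {m : ℕ} {l : ℕ → ℕ} {a b : ℕ}

theorem erdosGallai_strict_of_erdosGallaiAt_succ (hab : a < b) (hbm : b < m)
    (hconst : ∀ j ≤ a, l j = l 0) (hb : 1 ≤ l b) {i : ℕ} (hbi : l b ≤ i) (hia : i ≤ a)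
    (hEG : ErdosGallaiAt m l (i + 1)) :
    ∑ j ∈ range i, l j + i < i * i + ∑ j ∈ Ico i m, min (l j) i := by
  have hhead : ∀ k ≤ a + 1, ∑ j ∈ range k, l j = k * l 0 := fun k hk => by
    rw [sum_congr rfl fun j hj => hconst j (by rw [mem_range] at hj; omega), sum_const,
      card_range, smul_eq_mul]
  set Z := ∑ j ∈ Ico (i + 1) m, min (l j) i
  have htail : ∑ j ∈ Ico i m, min (l j) i = min (l 0) i + Z := by
    rw [sum_eq_sum_Ico_succ_bot (by omega), hconst i hia]
  have hbZ : l b ≤ Z := by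
    rw [← min_eq_left hbi]
    exact single_le_sum (f := fun j => min (l j) i) (fun _ _ => Nat.zero_le _)
      (mem_Ico.2 ⟨by omega, hbm⟩)
  unfold ErdosGallaiAt at hEG
  rw [hhead (i + 1) (by omega)] at hEG
  rw [hhead i (by omega), htail]
  by_contra! hnot
  rcases le_total (l 0) i with hΔ | hΔ
  · rw [min_eq_left hΔ] at hnot
    nlinarith [Nat.mul_le_mul_left i hΔ]
  · rw [min_eq_right hΔ] at hnot
    -- passing from `i` to `i + 1` raises `min (l j) ·` by a factor at most `(i + 1) / i`,
    -- and the part `l b ≤ i` is not raised at all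
    have hZ : i * ∑ j ∈ Ico (i + 1) m, min (l j) (i + 1) + l b ≤ (i + 1) * Z := by
      have hb_sum : ∑ j ∈ Ico (i + 1) m, (if j = b then l j else 0) = l b := by
        rw [sum_ite_eq', if_pos (mem_Ico.2 ⟨by omega, hbm⟩)]
      rw [mul_sum, mul_sum, ← hb_sum, ← sum_add_distrib]
      refine sum_le_sum fun j _ => ?_
      split_ifs with hj
      · subst hj
        rw [min_eq_left (by omega), min_eq_left hbi]
        linarith
      · rcases le_total (l j) i with h | h
        · rw [min_eq_left h, min_eq_left (by omega)]
          nlinarith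
        · rw [min_eq_right h, add_zero, mul_comm]
          exact Nat.mul_le_mul_right i (min_le_right _ _)
    nlinarith [Nat.mul_le_mul_left i hEG, Nat.mul_le_mul_left (i + 1) hnot]

theorem erdosGallaiAt_update_pred_pair (hanti : Antitone l)
    (heven : Even (∑ j ∈ range m, l j)) (hab : a < b) (hbm : b < m)
    (hconst : ∀ j ≤ a, l j = l 0) (hb : 1 ≤ l b) (hEG : ∀ i, ErdosGallaiAt m l i) (i : ℕ) :
    ErdosGallaiAt m (update (update l b (l b - 1)) a (l a - 1)) i := by
  have hba : l b ≤ l a := hanti hab.le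
  have hl₁a : update l b (l b - 1) a = l a := update_of_ne hab.ne _ _
  have hL := sum_range_update_pred hb i
  have hT := sum_Ico_min_update_pred hb hbm i
  have hL₁ := sum_range_update_pred (l := update l b (l b - 1)) (hl₁a ▸ hb.trans hba) i
  have hT₁ :=
    sum_Ico_min_update_pred (l := update l b (l b - 1)) (hl₁a ▸ hb.trans hba) (hab.trans hbm) i
  rw [hl₁a] at hL₁ hT₁
  -- lowering `l a` and `l b` lowers the left side at `i` by the number of `a, b` below `i`, and
  -- the right side by the number of `a, b` from `i` on whose part is at most `i`; the only deficit
  -- arises for `i ≤ a`, `l b ≤ i`, where the inequality at `i` has slack `1`, or `2` if `l a ≤ i`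
  have hstrict : i ≤ a → l b ≤ i →
      ∑ j ∈ range i, l j + i < i * i + ∑ j ∈ Ico i m, min (l j) i := fun hia hbi =>
    erdosGallai_strict_of_erdosGallaiAt_succ hab hbm hconst hb hbi hia (hEG (i + 1))
  -- when every part is at most `i`, both sides of the inequality at `i` have the same parity
  have hparity : i ≤ a → l a ≤ i →
      (∑ j ∈ range i, l j + i + (i * i + ∑ j ∈ Ico i m, min (l j) i)) % 2 = 0 := by
    intro hia hai
    have htail : ∑ j ∈ Ico i m, min (l j) i = ∑ j ∈ Ico i m, l j :=
      sum_congr rfl fun j _ =>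
        min_eq_left ((hanti (Nat.zero_le j)).trans ((hconst a le_rfl).symm ▸ hai))
    have hsplit : ∑ j ∈ range i, l j + ∑ j ∈ Ico i m, l j = ∑ j ∈ range m, l j := by
      rw [range_eq_Ico, range_eq_Ico m, sum_Ico_consecutive _ (Nat.zero_le i) (by omega)]
    rw [← Nat.even_iff, htail, show ∑ j ∈ range i, l j + i + (i * i + ∑ j ∈ Ico i m, l j)
      = ∑ j ∈ range m, l j + i * (i + 1) by rw [← hsplit]; ring]
    exact heven.add (Nat.even_mul_succ_self i)
  have hEGi := hEG i
  unfold ErdosGallaiAt at hEGi ⊢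
  split_ifs at hL hT hL₁ hT₁ <;> omega

end Choudum

section Realization

variable {m : ℕ} {l : ℕ → ℕ} {a b : ℕ}

theorem exists_last_pos (hzero : ∀ j, m ≤ j → l j = 0) (hpos : 0 < ∑ j ∈ range m, l j) :
    ∃ b < m, 0 < l b ∧ ∀ j, b < j → l j = 0 := by
  obtain ⟨j, hj, hlj⟩ := sum_pos_iff.1 hpos
  set b := Nat.findGreatest (0 < l ·) m
  have hb : 0 < l b := Nat.findGreatest_spec (P := (0 < l ·)) (mem_range.1 hj).le hlj
  have hbm : b < m := by
    by_contra! h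
    rw [hzero b h] at hb
    exact hb.false
  refine ⟨b, hbm, hb, fun k hk => ?_⟩
  rcases le_or_gt m k with hkm | hkm
  · exact hzero k hkm
  · exact Nat.eq_zero_of_not_pos (Nat.findGreatest_is_greatest (P := (0 < l ·)) hk hkm.le)

theorem apply_zero_le_of_erdosGallaiAt_one (hbm : b < m) (hbzero : ∀ j, b < j → l j = 0)
    (hEG : ErdosGallaiAt m l 1) : l 0 ≤ b := by
  have htail : ∑ j ∈ Ico 1 m, min (l j) 1 ≤ b := by
    rw [← sum_Ico_consecutive _ (Nat.le_add_left 1 b) hbm, sum_eq_zero (s := Ico (b + 1) m)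
      fun j hj => by rw [hbzero j (mem_Ico.1 hj).1, Nat.zero_min], add_zero]
    exact (sum_le_card_nsmul _ _ 1 fun j _ => min_le_right _ _).trans_eq (by simp)
  unfold ErdosGallaiAt at hEG
  rw [sum_range_one] at hEG
  omega

theorem exists_last_eq_apply_zero (hanti : Antitone l) (hb : 1 ≤ b) :
    ∃ a < b, (∀ j ≤ a, l j = l 0) ∧ (a + 1 = b ∨ l (a + 1) < l a) := by
  set a := Nat.findGreatest (fun j => l j = l 0) (b - 1)
  have ha : l a = l 0 := Nat.findGreatest_spec (P := fun j => l j = l 0) (Nat.zero_le _) rfl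
  have hab : a < b := by have := Nat.findGreatest_le (P := fun j => l j = l 0) (b - 1); omega
  refine ⟨a, hab, fun j hj => le_antisymm (hanti (Nat.zero_le j)) (ha ▸ hanti hj), ?_⟩
  rcases Nat.lt_or_ge (a + 1) b with h | h
  · exact Or.inr (ha ▸ (hanti (Nat.zero_le _)).lt_of_ne
      (Nat.findGreatest_is_greatest (P := fun j => l j = l 0) (Nat.lt_succ_self a) (by omega)))
  · exact Or.inl (by omega)

theorem exists_degree_eq_of_update_pred_pair (hanti : Antitone l) (hab : a < b) (hbm : b < m)
    (hla : l a ≤ b) (hb : 1 ≤ l b) (G' : SimpleGraph (Fin m))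
    [DecidableRel G'.Adj] (hdeg' : ∀ v, G'.degree v = update (update l b (l b - 1)) a (l a - 1) v) :
    ∃ (G : SimpleGraph (Fin m)) (_ : DecidableRel G.Adj), ∀ v, G.degree v = l v := by
  set av : Fin m := ⟨a, hab.trans hbm⟩
  set bv : Fin m := ⟨b, hbm⟩
  have hdeg'a : G'.degree av = l a - 1 := by simp [hdeg', av]
  have hdeg'b : G'.degree bv = l b - 1 := by simp [hdeg', bv, hab.ne']
  have hdeg'o : ∀ v : Fin m, v ≠ av → v ≠ bv → G'.degree v = l v := fun v hva hvb => by
    rw [hdeg', update_of_ne (Fin.val_ne_of_ne hva), update_of_ne (Fin.val_ne_of_ne hvb)]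
  -- the closed neighbourhood of `av` has `l a ≤ b` vertices
  obtain ⟨w, hwb, hwa⟩ : ∃ w ∈ Iic bv, w ∉ insert av (G'.neighborFinset av) := by
    refine exists_mem_notMem_of_card_lt_card ((card_insert_le _ _).trans_lt ?_)
    rw [card_neighborFinset_eq_degree, hdeg'a, Fin.card_Iic]
    simp only [bv]
    omega
  simp only [mem_insert, mem_neighborFinset, not_or] at hwa
  have hbw : G'.Adj av bv → G'.degree bv < G'.degree w := fun hadj => by
    have hwb' : w ≠ bv := fun h => hwa.2 (h ▸ hadj)
    rw [hdeg'b, hdeg'o w hwa.1 hwb']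
    have := hanti (show (w : ℕ) ≤ b from Fin.le_def.1 (mem_Iic.1 hwb))
    omega
  obtain ⟨G, _, hdeg⟩ := G'.exists_degree_add_pair (Fin.ne_of_val_ne hab.ne) hwa.1 hwa.2 hbw
  refine ⟨G, inferInstance, fun v => ?_⟩
  rw [hdeg]
  by_cases hva : v = av
  · rw [hva, hdeg'a, if_pos (Or.inl rfl)]
    exact Nat.sub_add_cancel (hb.trans (hanti hab.le))
  by_cases hvb : v = bv
  · rw [hvb, hdeg'b, if_pos (Or.inr rfl)]
    exact Nat.sub_add_cancel hb
  · rw [hdeg'o v hva hvb, if_neg (by tauto), add_zero]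

theorem exists_degree_eq_of_erdosGallai (hanti : Antitone l) (hzero : ∀ j, m ≤ j → l j = 0)
    (heven : Even (∑ j ∈ range m, l j)) (hEG : ∀ i, ErdosGallaiAt m l i) :
    ∃ (G : SimpleGraph (Fin m)) (_ : DecidableRel G.Adj), ∀ v, G.degree v = l v := by
  induction hn : ∑ j ∈ range m, l j using Nat.strong_induction_on generalizing l with
  | _ n IH =>
    rcases Nat.eq_zero_or_pos n with rfl | hpos
    · refine ⟨⊥, inferInstance, fun v => ?_⟩
      rw [bot_degree, eq_comm]
      exact sum_eq_zero_iff.1 hn v (mem_range.2 v.isLt)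
    obtain ⟨b, hbm, hb, hbzero⟩ := exists_last_pos hzero (hn ▸ hpos)
    have hl0b := apply_zero_le_of_erdosGallaiAt_one hbm hbzero (hEG 1)
    obtain ⟨a, hab, hconst, hstep⟩ :=
      exists_last_eq_apply_zero hanti (hb.trans_le ((hanti (Nat.zero_le b)).trans hl0b))
    set l' := update (update l b (l b - 1)) a (l a - 1) with hl'
    have hanti' : Antitone l' :=
      antitone_update_pred_pair hanti hab hb (hbzero _ b.lt_succ_self) hstep
    have hsum' : ∑ j ∈ range m, l' j + 2 = n :=
      hn ▸ sum_range_update_pred_pair hab hbm hb (hb.trans_le (hanti hab.le))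
    have hzero' : ∀ j, m ≤ j → l' j = 0 := fun j hj => by
      rw [hl', update_of_ne (by omega), update_of_ne (by omega), hzero j hj]
    have heven' : Even (∑ j ∈ range m, l' j) := by
      obtain ⟨r, hr⟩ := hn ▸ heven
      exact ⟨r - 1, by omega⟩
    obtain ⟨G', _, hdeg'⟩ := IH (n - 2) (by omega) hanti' hzero' heven'
      (erdosGallaiAt_update_pred_pair hanti heven hab hbm hconst hb hEG) (by omega)
    exact exists_degree_eq_of_update_pred_pair hanti hab hbm ((hconst a le_rfl).trans_le hl0b) hb G'
      hdeg'

end Realization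

theorem graphical_iff_nash_williams_general (n m : ℕ) (hn : Even n) (l : ℕ → ℕ)
    (hanti : Antitone l)
    (hzero : ∀ j, m ≤ j → l j = 0)
    (hsum : ∑ j ∈ Finset.range m, l j = n) :
    (∃ (G : SimpleGraph (Fin m)) (_ : DecidableRel G.Adj) (σ : Equiv.Perm (Fin m)),
        ∀ i : Fin m, G.degree (σ i) = l i)
      ↔ ∀ i, 1 ≤ i → i ≤ ((Finset.range m).filter (fun t => t + 1 ≤ l t)).card →
          ∑ j ∈ Finset.range i, l j + i
            ≤ ∑ j ∈ Finset.range i, ((Finset.range m).filter (fun t => j + 1 ≤ l t)).card := by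
  change _ ↔ ∀ i, 1 ≤ i → i ≤ durfee m l → ∑ j ∈ range i, l j + i ≤ ∑ j ∈ range i, conjPart m l j
  constructor
  · rintro ⟨G, _, σ, hdeg⟩ i - hi
    exact (nashWilliams_iff_erdosGallaiAt hanti hi).2
      (erdosGallaiAt_of_degree_perm G σ hdeg (hi.trans durfee_le))
  · intro hNW
    have hEG : ∀ i, ErdosGallaiAt m l i := by
      refine erdosGallaiAt_of_forall_le_durfee hanti hzero fun i hi => ?_
      rcases Nat.eq_zero_or_pos i with rfl | hi₁
      · simp [ErdosGallaiAt]
      · exact (nashWilliams_iff_erdosGallaiAt hanti hi).1 (hNW i hi₁ hi)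
    obtain ⟨G, _, hdeg⟩ := exists_degree_eq_of_erdosGallai hanti hzero (hsum ▸ hn) hEG
    exact ⟨G, inferInstance, Equiv.refl _, hdeg⟩

/-- Nash-Williams form of the Erdős–Gallai theorem: a partition `λ` of an even integer `n`
(given as an antitone function `l : ℕ → ℕ`, with `l j` the `(j+1)`-st part, having exactly
`m` positive parts summing to `n`) is the size-ordered degree sequence of a simple graph iff
`∑_{j=1}^i λ'_j ≥ ∑_{j=1}^i λ_j + i` for all `1 ≤ i ≤ D(λ)`, where `λ'` is the conjugate
partition and `D(λ)` is the Durfee square size. -/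
theorem graphical_iff_nash_williams (n m : ℕ) (hn : Even n) (l : ℕ → ℕ)
    (hanti : Antitone l)
    (hpos : ∀ j < m, 0 < l j) (hzero : ∀ j, m ≤ j → l j = 0)
    (hsum : ∑ j ∈ Finset.range m, l j = n) :
    (∃ (G : SimpleGraph (Fin m)) (_ : DecidableRel G.Adj) (σ : Equiv.Perm (Fin m)),
        ∀ i : Fin m, G.degree (σ i) = l i)
      ↔ ∀ i, 1 ≤ i → i ≤ ((Finset.range m).filter (fun t => t + 1 ≤ l t)).card →
          ∑ j ∈ Finset.range i, l j + i
            ≤ ∑ j ∈ Finset.range i, ((Finset.range m).filter (fun t => j + 1 ≤ l t)).card :=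
  graphical_iff_nash_williams_general n m hn l hanti hzero hsum
end

section
/- Let S_j and S'_j be independent sums of j i.i.d. Exponential(1) random variables each. For β > 1, P(S'_j / S_j ≥ β) ≤ (1 + (β-1)²/(4β))^{-j}. -/
/-!
Chernoff bound for `S' - β S`. Since `S ≥ 0` almost surely, `S' / S ≥ β` forces
`S' - β S ≥ 0`, and for `0 ≤ t < 1` the moment generating function of `S' - β S` at `t` is
`((1 + β t) (1 - t))⁻ʲ`. The choice `t = (β - 1) / (2 β)` gives
`(1 + β t) (1 - t) = (β + 1)² / (4 β) = 1 + (β - 1)² / (4 β)`.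
-/

open MeasureTheory ProbabilityTheory Real Set

lemma sub_mul_nonneg_of_le_div {a b β : ℝ} (hβ : 0 < β) (hb : 0 ≤ b) (h : β ≤ a / b) :
    0 ≤ a - β * b := by
  rcases hb.eq_or_lt with rfl | hb
  · rw [div_zero] at h
    exact absurd h hβ.not_ge
  · rw [le_div_iff₀ hb] at h
    linarith

namespace ProbabilityTheory

lemma gammaPDF_one_toReal_mul_exp {r : ℝ} (hr : 0 < r) (s : ℝ) :
    (fun x => (gammaPDF 1 r x).toReal * exp (s * x))
      = (Ici 0).indicator (fun x => r * exp ((s - r) * x)) := by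
  ext x
  by_cases hx : 0 ≤ x
  · rw [gammaPDF_of_nonneg hx, indicator_of_mem (mem_Ici.2 hx),
      ENNReal.toReal_ofReal (by positivity)]
    simp only [rpow_one, Gamma_one, div_one, sub_self, rpow_zero, mul_one]
    rw [mul_assoc, ← exp_add]
    ring_nf
  · rw [gammaPDF_of_neg (not_le.1 hx), indicator_of_notMem (fun h => hx (mem_Ici.1 h))]
    simp

lemma mgf_id_expMeasure {r s : ℝ} (hr : 0 < r) (hs : s < r) :
    mgf id (expMeasure r) s = r / (r - s) := by
  have hpdf : Measurable (gammaPDF 1 r) := by unfold gammaPDF; fun_prop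
  rw [mgf, expMeasure, gammaMeasure,
    integral_withDensity_eq_integral_toReal_smul hpdf (ae_of_all _ fun _ => ENNReal.ofReal_lt_top)]
  simp only [id, smul_eq_mul]
  rw [gammaPDF_one_toReal_mul_exp hr, integral_indicator measurableSet_Ici,
    integral_Ici_eq_integral_Ioi, integral_const_mul, integral_exp_mul_Ioi (by linarith),
    mul_zero, exp_zero, neg_div, ← div_neg, neg_sub, mul_one_div]

lemma expMeasure_Iio_zero (r : ℝ) : expMeasure r (Iio 0) = 0 := by
  rw [expMeasure, gammaMeasure, withDensity_apply _ measurableSet_Iio]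
  exact lintegral_gammaPDF_of_nonpos le_rfl

variable {Ω : Type*} [MeasurableSpace Ω] {μ : Measure Ω}

lemma ae_nonneg_of_map_eq_expMeasure {X : Ω → ℝ} {r : ℝ} (hX : AEMeasurable X μ)
    (hlaw : μ.map X = expMeasure r) :
    ∀ᵐ ω ∂μ, 0 ≤ X ω := by
  refine ae_of_ae_map hX ?_
  rw [hlaw, ae_iff]
  simp only [not_le]
  exact expMeasure_Iio_zero r

lemma iIndepFun.mgf_sum_const_mul_of_map_eq_expMeasure {ι : Type*} [Fintype ι]
    {E : ι → Ω → ℝ} (hmeas : ∀ i, Measurable (E i)) (hindep : iIndepFun E μ) {r : ℝ}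
    (hr : 0 < r) (hlaw : ∀ i, μ.map (E i) = expMeasure r) (c : ι → ℝ) {t : ℝ}
    (ht : ∀ i, c i * t < r) :
    mgf (∑ i, fun ω => c i * E i ω) μ t = ∏ i, r / (r - c i * t) := by
  have hindep' : iIndepFun (fun i ω => c i * E i ω) μ :=
    hindep.comp (fun i x => c i * x) fun i => measurable_const_mul (c i)
  rw [hindep'.mgf_sum fun i => (hmeas i).const_mul (c i)]
  refine Finset.prod_congr rfl fun i _ => ?_
  rw [mgf_const_mul, ← mgf_id_map (hmeas i).aemeasurable, hlaw i,
    mgf_id_expMeasure hr (ht i)]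

lemma measure_ratio_of_exp_sums_ge_le [IsProbabilityMeasure μ] {ι κ : Type*} [Fintype ι]
    [Fintype κ] {E : ι ⊕ κ → Ω → ℝ} (hmeas : ∀ i, Measurable (E i))
    (hindep : iIndepFun E μ) {r : ℝ} (hr : 0 < r) (hlaw : ∀ i, μ.map (E i) = expMeasure r)
    {β t : ℝ} (hβ : 0 < β) (ht : 0 ≤ t) (htr : t < r) :
    μ {ω | β ≤ (∑ k, E (Sum.inr k) ω) / (∑ i, E (Sum.inl i) ω)}
      ≤ ENNReal.ofReal
          ((r / (r + β * t)) ^ Fintype.card ι * (r / (r - t)) ^ Fintype.card κ) := by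
  set c : ι ⊕ κ → ℝ := Sum.elim (fun _ => -β) (fun _ => 1)
  set X : Ω → ℝ := ∑ a, fun ω => c a * E a ω
  have hX (ω : Ω) : X ω = ∑ k, E (Sum.inr k) ω - β * ∑ i, E (Sum.inl i) ω := by
    simp only [X, c, Fintype.sum_sum_type, Sum.elim_inl, Sum.elim_inr, neg_mul, one_mul,
      Pi.add_apply, Finset.sum_apply, Finset.sum_neg_distrib, Finset.mul_sum]
    ring
  have hmgf :
      mgf X μ t = (r / (r + β * t)) ^ Fintype.card ι * (r / (r - t)) ^ Fintype.card κ := by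
    rw [hindep.mgf_sum_const_mul_of_map_eq_expMeasure hmeas hr hlaw c, Fintype.prod_sum_type]
    · simp [c, Finset.prod_const, sub_eq_add_neg, div_pow]
    · rintro (i | k)
      · simp only [c, Sum.elim_inl]; nlinarith
      · simpa [c] using htr
  have hint : Integrable (fun ω => exp (t * X ω)) μ := by
    refine mgf_pos_iff.mp (hmgf ▸ ?_)
    have : 0 < r + β * t := by positivity
    have : 0 < r - t := by linarith
    positivity
  have hS : ∀ᵐ ω ∂μ, 0 ≤ ∑ i, E (Sum.inl i) ω := by
    have hE := ae_all_iff.2 fun i =>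
      ae_nonneg_of_map_eq_expMeasure (hmeas (Sum.inl i)).aemeasurable (hlaw _)
    filter_upwards [hE] with ω hω using Finset.sum_nonneg fun i _ => hω i
  calc μ {ω | β ≤ (∑ k, E (Sum.inr k) ω) / (∑ i, E (Sum.inl i) ω)}
      ≤ μ {ω | 0 ≤ X ω} := by
        refine measure_mono_ae ?_
        filter_upwards [hS] with ω hω hle
        change 0 ≤ X ω
        exact (hX ω).symm ▸ sub_mul_nonneg_of_le_div hβ hω hle
    _ = ENNReal.ofReal (μ.real {ω | 0 ≤ X ω}) := (ofReal_measureReal).symm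
    _ ≤ ENNReal.ofReal (mgf X μ t) :=
        ENNReal.ofReal_le_ofReal (by simpa using measure_ge_le_exp_mul_mgf 0 ht hint)
    _ = _ := by rw [hmgf]

end ProbabilityTheory

theorem ratio_of_exp_sums_tail_general {Ω : Type*} [MeasurableSpace Ω] (μ : Measure Ω)
    [IsProbabilityMeasure μ] (j : ℕ) (E : Fin j ⊕ Fin j → Ω → ℝ)
    (hmeas : ∀ i, Measurable (E i))
    (hindep : iIndepFun E μ)
    (hexp : ∀ i, Measure.map (E i) μ = expMeasure 1)
    (β : ℝ) (hβ : 1 < β) :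
    μ {ω | β ≤ (∑ i, E (Sum.inr i) ω) / (∑ i, E (Sum.inl i) ω)}
      ≤ ENNReal.ofReal ((1 + (β - 1) ^ 2 / (4 * β)) ^ j)⁻¹ := by
  have hβ0 : 0 < β := by linarith
  set t := (β - 1) / (2 * β) with ht
  have ht0 : 0 ≤ t := div_nonneg (by linarith) (by linarith)
  have ht1 : t < 1 := by rw [div_lt_one (by linarith)]; linarith
  have hopt :
      (1 / (1 + β * t)) ^ j * (1 / (1 - t)) ^ j = ((1 + (β - 1) ^ 2 / (4 * β)) ^ j)⁻¹ := by
    have hβt : 1 + β * t = (β + 1) / 2 := by rw [ht]; field_simp; ring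
    have h1t : 1 - t = (β + 1) / (2 * β) := by rw [ht]; field_simp; ring
    rw [← mul_pow, ← inv_pow, one_div_mul_one_div, hβt, h1t, one_div]
    congr 1
    field_simp
    ring
  simpa only [Fintype.card_fin, hopt] using
    measure_ratio_of_exp_sums_ge_le hmeas hindep one_pos hexp hβ0 ht0 ht1

/-- For independent sums `S_j`, `S'_j` of `j` i.i.d. Exponential(1) variables each and `β > 1`,
`P(S'_j/S_j ≥ β) ≤ (1 + (β-1)²/(4β))^{-j}`. -/
theorem ratio_of_exp_sums_tail {Ω : Type*} [MeasurableSpace Ω] (μ : Measure Ω)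
    [IsProbabilityMeasure μ] (j : ℕ) (hj : 0 < j) (E : Fin j ⊕ Fin j → Ω → ℝ)
    (hmeas : ∀ i, Measurable (E i))
    (hindep : iIndepFun E μ)
    (hexp : ∀ i, Measure.map (E i) μ = expMeasure 1)
    (β : ℝ) (hβ : 1 < β) :
    μ {ω | β ≤ (∑ i, E (Sum.inr i) ω) / (∑ i, E (Sum.inl i) ω)}
      ≤ ENNReal.ofReal ((1 + (β - 1) ^ 2 / (4 * β)) ^ j)⁻¹ :=
  ratio_of_exp_sums_tail_general μ j E hmeas hindep hexp β hβ
end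

section
/- Let λ be a partition of n with at least k distinct column heights λ_1 > ... > λ_k > k and at least k distinct row lengths λ'_1 > ... > λ'_k > k. Deleting the k tallest columns and k longest rows yields a partition of ν = n − ∑_{j=1}^k λ_j − ∑_{j=1}^k λ'_j + k², whose largest part is at most λ'_k − k and whose number of parts is at most λ_k − k. Consequently, the number of partitions of n with prescribed first k parts (λ_1,...,λ_k) and first k conjugate parts (λ'_1,...,λ'_k) equals p_{ν, λ_k−k, λ'_k−k}, the number of partitions of ν into at most λ_k−k parts each of size at most λ'_k−k, provided ν > 0. -/
/-!
A partition `l` is encoded by its antitone row lengths, and its conjugate is characterised by the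
Galois connection `t < conjugate l j ↔ j < l t`, so identities between diagrams reduce to checks on
single cells. The first `k` rows and columns of `l` (its first `k` diagonal hooks) are fixed by
`a` and `b`, and contain `∑ a + ∑ (b - k)` cells when `k < b (k - 1)`. Removing them leaves the
diagram `dropHooks k l` with rows `l (k + s) - k`; conversely `l` is rebuilt from that diagram by
`addHooks`. Since `a (k - 1) > k` and `b (k - 1) > k`, the remaining diagram has parts at most
`a (k - 1) - k` and at most `b (k - 1) - k` parts, so its conjugate is a partition of `ν` in the
box counted on the right-hand side.
-/

open Finset

lemma mem_iff_lt_card_of_isLowerSet {S : Finset ℕ} (hS : IsLowerSet (S : Set ℕ)) {t : ℕ} :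
    t ∈ S ↔ t < #S := by
  obtain h | ⟨a, h⟩ := hS.eq_univ_or_Iio
  · exact absurd (h ▸ S.finite_toSet) Set.infinite_univ
  · obtain rfl : S = range a := by ext; simp [← Finset.mem_coe, h]
    simp

lemma card_filter_range_lt (M x : ℕ) : #{j ∈ range M | j < x} = min x M := by
  rw [← card_range (min x M)]
  congr 1
  ext j
  simp only [mem_filter, mem_range]
  omega

noncomputable def conjugate (l : ℕ →₀ ℕ) : ℕ →₀ ℕ :=
  Finsupp.onFinset (range (l.support.sup l)) (fun j => #{t ∈ l.support | j < l t}) fun j hj => by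
    obtain ⟨t, ht⟩ := card_ne_zero.mp hj
    rw [mem_filter] at ht
    exact mem_range.mpr (ht.2.trans_le (le_sup ht.1))

lemma conjugate_apply (l : ℕ →₀ ℕ) (j : ℕ) : conjugate l j = #{t ∈ l.support | j < l t} := rfl

lemma conjugate_apply_zero (l : ℕ →₀ ℕ) : conjugate l 0 = #l.support := by
  rw [conjugate_apply,
    filter_true_of_mem fun t ht => Nat.pos_of_ne_zero (Finsupp.mem_support_iff.mp ht)]

lemma antitone_conjugate (l : ℕ →₀ ℕ) : Antitone (conjugate l) := fun _ _ hij =>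
  card_le_card (monotone_filter_right _ fun _ _ => hij.trans_lt)

lemma lt_conjugate_iff {l : ℕ →₀ ℕ} (hl : Antitone l) {j t : ℕ} : t < conjugate l j ↔ j < l t := by
  have hlower : IsLowerSet (({s ∈ l.support | j < l s} : Finset ℕ) : Set ℕ) := fun s r hrs hs => by
    simp only [coe_filter, Set.mem_ofPred_eq, Finsupp.mem_support_iff] at hs ⊢
    have := hl hrs
    omega
  rw [conjugate_apply, ← mem_iff_lt_card_of_isLowerSet hlower, mem_filter, Finsupp.mem_support_iff]
  omega

lemma conjugate_conjugate {l : ℕ →₀ ℕ} (hl : Antitone l) : conjugate (conjugate l) = l := by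
  ext t
  refine eq_of_forall_lt_iff fun j => ?_
  rw [lt_conjugate_iff (antitone_conjugate l), lt_conjugate_iff hl]

lemma card_support_conjugate {l : ℕ →₀ ℕ} (hl : Antitone l) : #(conjugate l).support = l 0 := by
  rw [← card_range (l 0)]
  congr 1
  ext j
  rw [Finsupp.mem_support_iff, mem_range, ← Nat.pos_iff_ne_zero, lt_conjugate_iff hl]

lemma sum_conjugate (l : ℕ →₀ ℕ) :
    (conjugate l).sum (fun _ v => v) = l.sum (fun _ v => v) := by
  have hsupp : (conjugate l).support ⊆ range (l.support.sup l) := Finsupp.support_onFinset_subset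
  rw [Finsupp.sum_of_support_subset _ hsupp _ fun _ _ => rfl]
  simp only [conjugate_apply]
  refine (sum_card_bipartiteAbove_eq_sum_card_bipartiteBelow (fun j t => j < l t)).trans
    (sum_congr rfl fun t ht => ?_)
  rw [bipartiteBelow, card_filter_range_lt, min_eq_left (le_sup ht)]

noncomputable def dropHooks (k : ℕ) (l : ℕ →₀ ℕ) : ℕ →₀ ℕ :=
  (l.comapDomain (k + ·) (add_right_injective k).injOn).mapRange (· - k) (zero_tsub k)

lemma dropHooks_apply (k : ℕ) (l : ℕ →₀ ℕ) (s : ℕ) : dropHooks k l s = l (k + s) - k := rfl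

lemma antitone_dropHooks {l : ℕ →₀ ℕ} (hl : Antitone l) (k : ℕ) : Antitone (dropHooks k l) :=
  fun _ _ h => Nat.sub_le_sub_right (hl (Nat.add_le_add_left h k)) k

lemma conjugate_dropHooks {l : ℕ →₀ ℕ} (hl : Antitone l) (k : ℕ) :
    conjugate (dropHooks k l) = dropHooks k (conjugate l) := by
  ext t
  refine eq_of_forall_lt_iff fun c => ?_
  rw [lt_conjugate_iff (antitone_dropHooks hl k), dropHooks_apply, dropHooks_apply,
    Nat.lt_sub_iff_add_lt', Nat.lt_sub_iff_add_lt', lt_conjugate_iff hl]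

lemma sum_eq_add_sum_dropHooks {l : ℕ →₀ ℕ} (hl : Antitone l) (k : ℕ) :
    l.sum (fun _ v => v) = ∑ r ∈ range k, l r + ∑ c ∈ range k, (conjugate l c - k)
      + (dropHooks k l).sum (fun _ v => v) := by
  obtain ⟨N, hN⟩ := l.support.exists_nat_subset_range
  have hsupp : l.support ⊆ range (k + N) := hN.trans (range_subset_range.mpr (by omega))
  have hdrop : (dropHooks k l).support ⊆ range N := fun s hs => by
    rw [Finsupp.mem_support_iff, dropHooks_apply] at hs
    have := mem_range.mp (hsupp (Finsupp.mem_support_iff.mpr (by omega : l (k + s) ≠ 0)))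
    exact mem_range.mpr (by omega)
  have hcols : ∑ s ∈ range N, min (l (k + s)) k = ∑ c ∈ range k, (conjugate l c - k) :=
    calc ∑ s ∈ range N, min (l (k + s)) k
        = ∑ s ∈ range N, #{c ∈ range k | c < l (k + s)} := by simp only [card_filter_range_lt]
      _ = ∑ c ∈ range k, #{s ∈ range N | c < l (k + s)} :=
          sum_card_bipartiteAbove_eq_sum_card_bipartiteBelow _
      _ = ∑ c ∈ range k, #{s ∈ range N | s < conjugate l c - k} := by
          refine sum_congr rfl fun c _ => congrArg card (filter_congr fun s _ => ?_)
          rw [Nat.lt_sub_iff_add_lt', lt_conjugate_iff hl]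
      _ = ∑ c ∈ range k, (conjugate l c - k) := by
          refine sum_congr rfl fun c _ => ?_
          have : conjugate l c ≤ k + N :=
            (card_filter_le _ _).trans ((card_le_card hsupp).trans (card_range _).le)
          rw [card_filter_range_lt, min_eq_left (by omega)]
  rw [Finsupp.sum_of_support_subset _ hsupp _ fun _ _ => rfl, sum_range_add,
    Finsupp.sum_of_support_subset _ hdrop _ fun _ _ => rfl, ← hcols, add_assoc,
    ← sum_add_distrib]
  simp only [dropHooks_apply]
  congr 1
  exact sum_congr rfl fun s _ => by omega

/-- Row `r ≥ k` consists of the `#{c < k | r < b c}` cells it meets in the first `k` columns,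
followed by row `r - k` of `μ`. -/
noncomputable def addHooks (k : ℕ) (a b : ℕ → ℕ) (μ : ℕ →₀ ℕ) : ℕ →₀ ℕ :=
  Finsupp.onFinset (range (k + ∑ c ∈ range k, b c) ∪ μ.support.map (addLeftEmbedding k))
    (fun r => if r < k then a r else #{c ∈ range k | r < b c} + μ (r - k)) fun r hr => by
      rw [mem_union, mem_range, mem_map]
      by_cases hrk : r < k
      · exact Or.inl (by omega)
      by_cases hμ : μ (r - k) = 0
      · rw [if_neg hrk, hμ, add_zero] at hr
        obtain ⟨c, hc⟩ := card_ne_zero.mp hr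
        rw [mem_filter] at hc
        have := single_le_sum (fun _ _ => Nat.zero_le _) hc.1 (f := b)
        exact Or.inl (by omega)
      · exact Or.inr ⟨r - k, Finsupp.mem_support_iff.mpr hμ, by simp; omega⟩

section addHooks

variable {k : ℕ} {a b : ℕ → ℕ} {μ : ℕ →₀ ℕ}

lemma addHooks_of_lt {r : ℕ} (hr : r < k) : addHooks k a b μ r = a r := if_pos hr

lemma addHooks_add (s : ℕ) : addHooks k a b μ (k + s) = #{c ∈ range k | k + s < b c} + μ s := by
  simp [addHooks]

lemma addHooks_add_le (s : ℕ) : addHooks k a b μ (k + s) ≤ k + μ s := by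
  rw [addHooks_add]
  exact Nat.add_le_add_right ((card_filter_le _ _).trans (card_range k).le) _

lemma filter_range_lt_eq_range (hb : AntitoneOn b (Set.Iio k)) {r : ℕ} (hr : r < b (k - 1)) :
    {c ∈ range k | r < b c} = range k :=
  filter_true_of_mem fun c hc => by
    rw [mem_range] at hc
    exact hr.trans_le (hb hc (show k - 1 < k by omega) (by omega))

lemma lt_addHooks_add_iff_of_lt (hb : AntitoneOn b (Set.Iio k))
    (hμ : ∀ s, μ s ≠ 0 → k + s < b (k - 1)) {c s : ℕ} (hc : c < k) :
    c < addHooks k a b μ (k + s) ↔ k + s < b c := by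
  rw [addHooks_add]
  by_cases hs : μ s = 0
  · have hlower : IsLowerSet (({c ∈ range k | k + s < b c} : Finset ℕ) : Set ℕ) :=
      fun i j hji hi => by
        simp only [coe_filter, Set.mem_ofPred_eq, mem_range] at hi ⊢
        exact ⟨by omega, hi.2.trans_le (hb (by simp; omega) hi.1 hji)⟩
    rw [hs, add_zero, ← mem_iff_lt_card_of_isLowerSet hlower, mem_filter, mem_range]
    exact and_iff_right hc
  · rw [filter_range_lt_eq_range hb (hμ s hs), card_range]
    exact iff_of_true (by omega) ((hμ s hs).trans_le (hb hc (show k - 1 < k by omega) (by omega)))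

lemma add_lt_addHooks_add_iff (hb : AntitoneOn b (Set.Iio k))
    (hμ : ∀ s, μ s ≠ 0 → k + s < b (k - 1)) {c s : ℕ} :
    k + c < addHooks k a b μ (k + s) ↔ c < μ s := by
  by_cases hs : μ s = 0
  · have := addHooks_add_le (k := k) (a := a) (b := b) (μ := μ) s
    omega
  · rw [addHooks_add, filter_range_lt_eq_range hb (hμ s hs), card_range]
    omega

lemma dropHooks_addHooks (hb : AntitoneOn b (Set.Iio k))
    (hμ : ∀ s, μ s ≠ 0 → k + s < b (k - 1)) : dropHooks k (addHooks k a b μ) = μ := by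
  ext s
  refine eq_of_forall_lt_iff fun c => ?_
  rw [dropHooks_apply, Nat.lt_sub_iff_add_lt', add_lt_addHooks_add_iff hb hμ]

lemma conjugate_addHooks_of_lt (ha : AntitoneOn a (Set.Iio k)) (hak : k < a (k - 1))
    (hb : AntitoneOn b (Set.Iio k)) (hbk : k < b (k - 1))
    (hμ : ∀ s, μ s ≠ 0 → k + s < b (k - 1)) (hanti : Antitone (addHooks k a b μ)) {c : ℕ}
    (hc : c < k) : conjugate (addHooks k a b μ) c = b c := by
  refine eq_of_forall_lt_iff fun r => ?_
  rw [lt_conjugate_iff hanti]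
  rcases lt_or_ge r k with hr | hr
  · have := ha hr (show k - 1 < k by omega) (Nat.le_sub_one_of_lt hr)
    have := hb hc (show k - 1 < k by omega) (Nat.le_sub_one_of_lt hc)
    rw [addHooks_of_lt hr]
    omega
  · obtain ⟨s, rfl⟩ := Nat.exists_eq_add_of_le hr
    exact lt_addHooks_add_iff_of_lt hb hμ hc

lemma antitone_addHooks (ha : AntitoneOn a (Set.Iio k)) (hμ : Antitone μ)
    (hμ0 : k + μ 0 ≤ a (k - 1)) : Antitone (addHooks k a b μ) := by
  intro r r' h
  rcases lt_or_ge r' k with hr' | hr'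
  · rw [addHooks_of_lt hr', addHooks_of_lt (h.trans_lt hr')]
    exact ha (h.trans_lt hr') hr' h
  obtain ⟨s', rfl⟩ := Nat.exists_eq_add_of_le hr'
  rcases lt_or_ge r k with hr | hr
  · rw [addHooks_of_lt hr]
    calc addHooks k a b μ (k + s') ≤ k + μ s' := addHooks_add_le s'
      _ ≤ k + μ 0 := Nat.add_le_add_left (hμ (Nat.zero_le s')) k
      _ ≤ a (k - 1) := hμ0
      _ ≤ a r := ha hr (show k - 1 < k by omega) (by omega)
  · obtain ⟨s, rfl⟩ := Nat.exists_eq_add_of_le hr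
    rw [addHooks_add, addHooks_add]
    exact add_le_add (card_le_card (monotone_filter_right _ fun _ _ => by omega)) (hμ (by omega))

end addHooks

def partitionsWithHooks (n k : ℕ) (a b : ℕ → ℕ) : Set (ℕ →₀ ℕ) :=
  {l | Antitone ⇑l ∧ l.sum (fun _ v => v) = n ∧ (∀ j < k, l j = a j)
    ∧ ∀ j < k, conjugate l j = b j}

def partitionsInBox (ν p q : ℕ) : Set (ℕ →₀ ℕ) :=
  {l | Antitone ⇑l ∧ l.sum (fun _ v => v) = ν ∧ #l.support ≤ p ∧ ∀ t, l t ≤ q}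

section bijection

variable {n k ν : ℕ} {a b : ℕ → ℕ}

lemma mapsTo_conjugate_dropHooks (hk : 0 < k)
    (hn : n = ∑ r ∈ range k, a r + ∑ c ∈ range k, (b c - k) + ν) :
    Set.MapsTo (fun l => conjugate (dropHooks k l)) (partitionsWithHooks n k a b)
      (partitionsInBox ν (a (k - 1) - k) (b (k - 1) - k)) := by
  rintro l ⟨hl, hsum, hrow, hcol⟩
  refine ⟨antitone_conjugate _, ?_, ?_, fun t => ?_⟩ <;> beta_reduce
  · have hrows : ∑ r ∈ range k, l r = ∑ r ∈ range k, a r :=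
      sum_congr rfl fun r hr => hrow r (mem_range.mp hr)
    have hcols : ∑ c ∈ range k, (conjugate l c - k) = ∑ c ∈ range k, (b c - k) :=
      sum_congr rfl fun c hc => by rw [hcol c (mem_range.mp hc)]
    have := sum_eq_add_sum_dropHooks hl k
    rw [sum_conjugate]
    omega
  · rw [card_support_conjugate (antitone_dropHooks hl k), dropHooks_apply, add_zero,
      ← hrow (k - 1) (by omega)]
    exact Nat.sub_le_sub_right (hl (Nat.sub_le k 1)) k
  · rw [conjugate_dropHooks hl, dropHooks_apply, ← hcol (k - 1) (by omega)]
    exact Nat.sub_le_sub_right (antitone_conjugate l (by omega)) k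

lemma mapsTo_addHooks_conjugate (ha : AntitoneOn a (Set.Iio k)) (hak : k < a (k - 1))
    (hb : AntitoneOn b (Set.Iio k)) (hbk : k < b (k - 1))
    (hn : n = ∑ r ∈ range k, a r + ∑ c ∈ range k, (b c - k) + ν) :
    Set.MapsTo (fun m => addHooks k a b (conjugate m))
      (partitionsInBox ν (a (k - 1) - k) (b (k - 1) - k)) (partitionsWithHooks n k a b) := by
  rintro m ⟨hm, hsum, hcard, hle⟩
  have hμ : ∀ s, conjugate m s ≠ 0 → k + s < b (k - 1) := fun s hs => by
    have := (lt_conjugate_iff hm).mp (Nat.pos_of_ne_zero hs)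
    have := hle 0
    omega
  have hanti : Antitone (addHooks k a b (conjugate m)) :=
    antitone_addHooks ha (antitone_conjugate m) (by rw [conjugate_apply_zero]; omega)
  have hcol : ∀ c < k, conjugate (addHooks k a b (conjugate m)) c = b c := fun c hc =>
    conjugate_addHooks_of_lt ha hak hb hbk hμ hanti hc
  refine ⟨hanti, ?_, fun r hr => addHooks_of_lt hr, hcol⟩
  have hrows : ∑ r ∈ range k, addHooks k a b (conjugate m) r = ∑ r ∈ range k, a r :=
    sum_congr rfl fun r hr => addHooks_of_lt (mem_range.mp hr)
  have hcols : ∑ c ∈ range k, (conjugate (addHooks k a b (conjugate m)) c - k)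
      = ∑ c ∈ range k, (b c - k) :=
    sum_congr rfl fun c hc => by rw [hcol c (mem_range.mp hc)]
  rw [sum_eq_add_sum_dropHooks hanti k, dropHooks_addHooks hb hμ, sum_conjugate, hrows, hcols,
    hsum, hn]

lemma invOn_addHooks_conjugate (hk : 0 < k) (hb : AntitoneOn b (Set.Iio k))
    (hbk : k < b (k - 1)) :
    Set.InvOn (fun m => addHooks k a b (conjugate m)) (fun l => conjugate (dropHooks k l))
      (partitionsWithHooks n k a b) (partitionsInBox ν (a (k - 1) - k) (b (k - 1) - k)) := by
  constructor
  · rintro l ⟨hl, -, hrow, hcol⟩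
    have hμ : ∀ s, dropHooks k l s ≠ 0 → k + s < b (k - 1) := fun s hs => by
      rw [← hcol (k - 1) (by omega), lt_conjugate_iff hl]
      rw [dropHooks_apply] at hs
      omega
    beta_reduce
    rw [conjugate_conjugate (antitone_dropHooks hl k)]
    ext r
    rcases lt_or_ge r k with hr | hr
    · rw [addHooks_of_lt hr, hrow r hr]
    obtain ⟨s, rfl⟩ := Nat.exists_eq_add_of_le hr
    refine eq_of_forall_lt_iff fun c => ?_
    rcases lt_or_ge c k with hc | hc
    · rw [lt_addHooks_add_iff_of_lt hb hμ hc, ← hcol c hc, lt_conjugate_iff hl]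
    · obtain ⟨c, rfl⟩ := Nat.exists_eq_add_of_le hc
      rw [add_lt_addHooks_add_iff hb hμ, dropHooks_apply]
      omega
  · rintro m ⟨hm, -, -, hle⟩
    have hμ : ∀ s, conjugate m s ≠ 0 → k + s < b (k - 1) := fun s hs => by
      have := (lt_conjugate_iff hm).mp (Nat.pos_of_ne_zero hs)
      have := hle 0
      omega
    beta_reduce
    rw [dropHooks_addHooks hb hμ, conjugate_conjugate hm]

end bijection

theorem count_partitions_prescribed_extremities_general (n k : ℕ) (hk : 0 < k) (a b : ℕ → ℕ)
    (haanti : ∀ i j, i < j → j < k → a j < a i) (hbanti : ∀ i j, i < j → j < k → b j < b i)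
    (hak : k < a (k - 1)) (hbk : k < b (k - 1))
    (ν : ℕ)
    (hνdef : (ν : ℤ) = (n : ℤ) - ∑ j ∈ Finset.range k, (a j : ℤ)
        - ∑ j ∈ Finset.range k, (b j : ℤ) + (k : ℤ) ^ 2) :
    Set.ncard {l : ℕ →₀ ℕ | Antitone ⇑l ∧ l.sum (fun _ v => v) = n
        ∧ (∀ j < k, l j = a j)
        ∧ (∀ j < k, (l.support.filter fun t => j + 1 ≤ l t).card = b j)}
      = Set.ncard {l : ℕ →₀ ℕ | Antitone ⇑l ∧ l.sum (fun _ v => v) = ν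
          ∧ l.support.card ≤ a (k - 1) - k
          ∧ ∀ t, l t ≤ b (k - 1) - k} := by
  have ha : AntitoneOn a (Set.Iio k) :=
    StrictAntiOn.antitoneOn fun i _ j hj hij => haanti i j hij hj
  have hb : AntitoneOn b (Set.Iio k) :=
    StrictAntiOn.antitoneOn fun i _ j hj hij => hbanti i j hij hj
  have hn : n = ∑ r ∈ range k, a r + ∑ c ∈ range k, (b c - k) + ν := by
    have hcols : ((∑ c ∈ range k, (b c - k) : ℕ) : ℤ) = ∑ c ∈ range k, (b c : ℤ) - k ^ 2 := by
      rw [Nat.cast_sum, sum_congr rfl fun c hc => Nat.cast_sub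
        (hbk.le.trans (hb (mem_range.mp hc) (show k - 1 < k by omega)
          (Nat.le_sub_one_of_lt (mem_range.mp hc)))),
        sum_sub_distrib, sum_const, card_range, nsmul_eq_mul, sq]
    push_cast [← Nat.cast_sum] at hcols hνdef
    omega
  exact (Set.InvOn.bijOn (invOn_addHooks_conjugate hk hb hbk)
    (mapsTo_conjugate_dropHooks hk hn) (mapsTo_addHooks_conjugate ha hak hb hbk hn)).ncard_eq

/-- Removing the `k` tallest columns and `k` longest rows of a Young diagram of area `n`,
with prescribed first `k` parts `a 0 > a 1 > ... > a (k-1) > k` and first `k` conjugate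
parts `b 0 > ... > b (k-1) > k`, is a bijection onto diagrams of area
`ν = n - ∑ a - ∑ b + k²` with at most `a (k-1) - k` parts, each at most `b (k-1) - k`.
Hence, provided `ν > 0`, the number of partitions of `n` (encoded as antitone finitely
supported functions `l : ℕ →₀ ℕ`, `l j` being the `(j+1)`-st part) with first `k` parts
given by `a` and first `k` conjugate parts given by `b` equals `p_{ν, a(k-1)-k, b(k-1)-k}`. -/
theorem count_partitions_prescribed_extremities (n k : ℕ) (hk : 0 < k) (a b : ℕ → ℕ)
    (haanti : ∀ i j, i < j → j < k → a j < a i) (hbanti : ∀ i j, i < j → j < k → b j < b i)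
    (hak : k < a (k - 1)) (hbk : k < b (k - 1))
    (ν : ℕ) (hν : 0 < ν)
    (hνdef : (ν : ℤ) = (n : ℤ) - ∑ j ∈ Finset.range k, (a j : ℤ)
        - ∑ j ∈ Finset.range k, (b j : ℤ) + (k : ℤ) ^ 2) :
    Set.ncard {l : ℕ →₀ ℕ | Antitone ⇑l ∧ l.sum (fun _ v => v) = n
        ∧ (∀ j < k, l j = a j)
        ∧ (∀ j < k, (l.support.filter fun t => j + 1 ≤ l t).card = b j)}
      = Set.ncard {l : ℕ →₀ ℕ | Antitone ⇑l ∧ l.sum (fun _ v => v) = ν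
          ∧ l.support.card ≤ a (k - 1) - k
          ∧ ∀ t, l t ≤ b (k - 1) - k} :=
  count_partitions_prescribed_extremities_general n k hk a b haanti hbanti hak hbk ν hνdef
end
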